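/- Let u : G_k → D be a group homomorphism such that u(a_i) ∈ {1, a, b} for every i, and such that u is surjective (equivalently, both a and b occur among the values u(a_i)). Then the preimage under u of the subgroup of D generated by {aba, bab} is a subgroup of G_k of index 3. -/

import Mathlib

/-- `Gk k` is the free product of `k+1` copies of the cyclic group of order two. -/
abbrev Gk (k : ℕ) : Type :=
  Monoid.CoprodI (fun _ : Fin (k + 1) => Multiplicative (ZMod 2))

/-- The canonical generator `a_i` of `Gk k`. -/
def gen (k : ℕ) (i : Fin (k + 1)) : Gk k :=
  Monoid.CoprodI.of (M := fun _ : Fin (k + 1) => Multiplicative (ZMod 2)) (i := i)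
    (Multiplicative.ofAdd (1 : ZMod 2))

/-- `D` is the infinite dihedral group: the free product of two copies of the
cyclic group of order two. -/
abbrev D : Type := Monoid.CoprodI (fun _ : Fin 2 => Multiplicative (ZMod 2))

/-- The first canonical generator `a` of `D`. -/
def genD_a : D :=
  Monoid.CoprodI.of (M := fun _ : Fin 2 => Multiplicative (ZMod 2)) (i := (0 : Fin 2))
    (Multiplicative.ofAdd (1 : ZMod 2))

/-- The second canonical generator `b` of `D`. -/
def genD_b : D :=
  Monoid.CoprodI.of (M := fun _ : Fin 2 => Multiplicative (ZMod 2)) (i := (1 : Fin 2))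
    (Multiplicative.ofAdd (1 : ZMod 2))


/-!
`D` acts on `{0, 1, 2}` by `a ↦ (0 1)`, `b ↦ (1 2)`, and `H = ⟨aba, bab⟩` fixes `1`. Left
multiplication by `a` or `b` permutes the cosets `H, aH, bH` (this is where `aba, bab ∈ H` enter),
so these three cosets cover `D`; they are distinct because `1, a, b` send `1` to three different
points. Hence `[D : H] = 3`, and pulling back along a surjection preserves the index.
-/

open Equiv

noncomputable def zmodTwoHom {G : Type*} [Group G] (g : G) (hg : g * g = 1) :
    Multiplicative (ZMod 2) →* G :=
  AddMonoidHom.toMultiplicativeLeft <| ZMod.lift 2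
    ⟨zmultiplesHom (Additive G) (Additive.ofMul g), by simp [two_zsmul, ← ofMul_mul, hg]⟩

@[simp]
theorem zmodTwoHom_ofAdd_one {G : Type*} [Group G] (g : G) (hg : g * g = 1) :
    zmodTwoHom g hg (Multiplicative.ofAdd 1) = g := by
  change Additive.toMul (ZMod.lift 2 _ ((1 : ℤ) : ZMod 2)) = g
  rw [ZMod.lift_coe]
  simp

theorem exists_inv_mul_mem_of_mclosure_eq_top {G : Type*} [Group G] {H : Subgroup G}
    {S T : Set G} (hS : Submonoid.closure S = ⊤) (hT : 1 ∈ T)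
    (hST : ∀ s ∈ S, ∀ t ∈ T, ∃ t' ∈ T, t'⁻¹ * (s * t) ∈ H) (g : G) :
    ∃ t ∈ T, t⁻¹ * g ∈ H := by
  induction g using Submonoid.induction_of_closure_eq_top_left hS with
  | one => exact ⟨1, hT, by simp⟩
  | mul_left s hs g ih =>
    obtain ⟨t, ht, hg⟩ := ih
    obtain ⟨t', ht', hst⟩ := hST s hs t ht
    refine ⟨t', ht', ?_⟩
    simpa only [mul_assoc, mul_inv_cancel_left] using H.mul_mem hst hg

theorem Subgroup.index_eq_card_of_bijOn {G α : Type*} [Group G] {H : Subgroup G} {T : Set G}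
    (φ : G →* Perm α) (x : α) (hH : H ≤ (MulAction.stabilizer (Perm α) x).comap φ)
    (hT : Set.BijOn (fun t => φ t x) T Set.univ) (hcover : ∀ g, ∃ t ∈ T, t⁻¹ * g ∈ H) :
    H.index = Nat.card α := by
  have apply_eq {g t : G} (h : t⁻¹ * g ∈ H) : φ t x = φ g x := by
    have : (φ t)⁻¹ (φ g x) = x := by simpa [Perm.mul_apply] using hH h
    exact (Perm.inv_eq_iff_eq.mp this).symm
  have hc : IsComplement T H := isComplement_iff_existsUnique_inv_mul_mem.2 fun g => by
    obtain ⟨t, ht, hg⟩ := hcover g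
    exact ⟨⟨t, ht⟩, hg, fun s hs => Subtype.ext <|
      hT.injOn s.2 ht ((apply_eq hs).trans (apply_eq hg).symm)⟩
  rw [← hc.card_left, Nat.card_congr (hT.equiv _), Nat.card_univ]

theorem multiplicative_zmod_two_cases (x : Multiplicative (ZMod 2)) :
    x = 1 ∨ x = Multiplicative.ofAdd 1 := by
  revert x; decide

theorem genD_a_mul_self : genD_a * genD_a = 1 := by
  rw [genD_a, ← map_mul, ← ofAdd_add, show (1 + 1 : ZMod 2) = 0 from rfl, ofAdd_zero, map_one]

theorem genD_b_mul_self : genD_b * genD_b = 1 := by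
  rw [genD_b, ← map_mul, ← ofAdd_add, show (1 + 1 : ZMod 2) = 0 from rfl, ofAdd_zero, map_one]

theorem genD_a_inv : genD_a⁻¹ = genD_a := inv_eq_of_mul_eq_one_right genD_a_mul_self

theorem genD_b_inv : genD_b⁻¹ = genD_b := inv_eq_of_mul_eq_one_right genD_b_mul_self

theorem mclosure_genD : Submonoid.closure {genD_a, genD_b} = ⊤ := by
  rw [eq_top_iff, ← Monoid.CoprodI.mclosure_iUnion_range_of, Submonoid.closure_le]
  simp only [Set.iUnion_subset_iff, Set.range_subset_iff]
  intro i m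
  rcases multiplicative_zmod_two_cases m with rfl | rfl
  · simp
  · apply Submonoid.subset_closure
    fin_cases i
    · exact Or.inl rfl
    · exact Or.inr rfl

noncomputable def toPermFin3 : D →* Perm (Fin 3) :=
  Monoid.CoprodI.lift
    ![zmodTwoHom (swap 0 1) (swap_mul_self 0 1), zmodTwoHom (swap 1 2) (swap_mul_self 1 2)]

@[simp]
theorem toPermFin3_genD_a : toPermFin3 genD_a = swap 0 1 := by
  simp [toPermFin3, genD_a]

@[simp]
theorem toPermFin3_genD_b : toPermFin3 genD_b = swap 1 2 := by
  simp [toPermFin3, genD_b]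

theorem closure_le_comap_toPermFin3_stabilizer :
    Subgroup.closure {genD_a * genD_b * genD_a, genD_b * genD_a * genD_b} ≤
      (MulAction.stabilizer (Perm (Fin 3)) (1 : Fin 3)).comap toPermFin3 := by
  rw [Subgroup.closure_le]
  rintro x (rfl | rfl) <;> simp [MulAction.mem_stabilizer_iff] <;> decide

theorem bijOn_toPermFin3_apply_one :
    Set.BijOn (fun t => toPermFin3 t 1) {1, genD_a, genD_b} Set.univ := by
  refine ⟨Set.mapsTo_univ _ _, ?_, fun y _ => ?_⟩
  · rintro s (rfl | rfl | rfl) t (rfl | rfl | rfl) h <;> simp at h ⊢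
  · fin_cases y
    · exact ⟨genD_a, by simp, by simp⟩
    · exact ⟨1, by simp, by simp⟩
    · exact ⟨genD_b, by simp, by simp⟩

theorem exists_inv_mul_genD_mul_mem {H : Subgroup D} (haba : genD_a * genD_b * genD_a ∈ H)
    (hbab : genD_b * genD_a * genD_b ∈ H) {s t : D} (hs : s ∈ ({genD_a, genD_b} : Set D))
    (ht : t ∈ ({1, genD_a, genD_b} : Set D)) :
    ∃ t' ∈ ({1, genD_a, genD_b} : Set D), t'⁻¹ * (s * t) ∈ H := by
  rcases hs with rfl | rfl <;> rcases ht with rfl | rfl | rfl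
  · exact ⟨genD_a, by simp, by simp⟩
  · exact ⟨1, by simp, by simp [genD_a_mul_self]⟩
  · exact ⟨genD_b, by simp, by simpa [genD_b_inv, mul_assoc] using hbab⟩
  · exact ⟨genD_b, by simp, by simp⟩
  · exact ⟨genD_a, by simp, by simpa [genD_a_inv, mul_assoc] using haba⟩
  · exact ⟨1, by simp, by simp [genD_b_mul_self]⟩

theorem index_closure_genD : (Subgroup.closure
      ({genD_a * genD_b * genD_a, genD_b * genD_a * genD_b} : Set D)).index = 3 := by
  refine (Subgroup.index_eq_card_of_bijOn toPermFin3 1 closure_le_comap_toPermFin3_stabilizer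
    bijOn_toPermFin3_apply_one ?_).trans (Nat.card_fin 3)
  exact exists_inv_mul_mem_of_mclosure_eq_top mclosure_genD (by simp) fun _ hs _ ht =>
    exists_inv_mul_genD_mul_mem (Subgroup.subset_closure (Or.inl rfl))
      (Subgroup.subset_closure (Or.inr rfl)) hs ht

theorem stmt16_general (k : ℕ) (u : Gk k →* D)
    (hsurj : Function.Surjective u) :
    (Subgroup.comap u (Subgroup.closure
      ({genD_a * genD_b * genD_a, genD_b * genD_a * genD_b} : Set D))).index = 3 := by
  rw [Subgroup.index_comap_of_surjective _ hsurj, index_closure_genD]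

theorem stmt16 (k : ℕ) (u : Gk k →* D)
    (hvals : ∀ i : Fin (k + 1), u (gen k i) ∈ ({1, genD_a, genD_b} : Set D))
    (hsurj : Function.Surjective u) :
    (Subgroup.comap u (Subgroup.closure
      ({genD_a * genD_b * genD_a, genD_b * genD_a * genD_b} : Set D))).index = 3 :=
  stmt16_general k u hsurj
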